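/- arXiv:1507.05181 — 2 statements merged into one kernel-verified Lean document; each statement's English description precedes it below -/
import Mathlib

section
/- Let Z be a real-valued random variable that is almost surely positive (P(Z > 0) = 1) and possesses the lack of memory property: for all s ≥ 0 and t ≥ 0, P(Z - t > s | Z > t) = P(Z > s). Then there exists λ > 0 such that Z is exponentially distributed with rate λ; equivalently, P(Z > z) = e^{-λz} for all z ≥ 0. -/
/-! The lack of memory property says exactly that the tail `G t = P(Z > t)` satisfies
`G (s + t) = G s * G t` on `[0, ∞)`, and `P(Z > 0) = 1` keeps `G` away from zero there. So `log G`
is additive and antitone on `[0, ∞)`, and such a function is linear: squeezing `n t` between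
consecutive integers gives `|log G t - t log G 1| ≤ |log G 1| / n`. The slope `-λ = log G 1` is
negative because the tail of a probability measure tends to `0`, and a law on `ℝ` is determined
by its tails. -/

open MeasureTheory ProbabilityTheory Real

open Set Filter Topology

theorem MonotoneOn.eq_mul_of_map_add {f : ℝ → ℝ} (hf : MonotoneOn f (Ici 0))
    (hadd : ∀ s ≥ (0 : ℝ), ∀ t ≥ (0 : ℝ), f (s + t) = f s + f t) {t : ℝ} (ht : 0 ≤ t) :
    f t = t * f 1 := by
  have hf0 : f 0 = 0 := by simpa using hadd 0 le_rfl 0 le_rfl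
  have hnat : ∀ n : ℕ, ∀ x ≥ (0 : ℝ), f (n * x) = n * f x := by
    intro n x hx
    induction n with
    | zero => simp [hf0]
    | succ n ih =>
      rw [Nat.cast_succ, add_mul, one_mul, hadd _ (by positivity) x hx, ih, add_mul, one_mul]
  have hmono : ∀ {a b : ℝ}, 0 ≤ a → a ≤ b → f a ≤ f b := fun ha hab =>
    hf (mem_Ici.2 ha) (mem_Ici.2 (ha.trans hab)) hab
  have hf1 : 0 ≤ f 1 := hf0 ▸ hmono le_rfl zero_le_one
  have hbound : ∀ n : ℕ, n * |f t - t * f 1| ≤ f 1 := by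
    intro n
    set k := ⌊n * t⌋₊
    have hk : (k : ℝ) ≤ n * t := Nat.floor_le (by positivity)
    have hk1 : n * t < k + 1 := Nat.lt_floor_add_one _
    have hlower : k * f 1 ≤ n * f t := by
      rw [← hnat n t ht, ← hnat k 1 zero_le_one, mul_one]
      exact hmono (by positivity) hk
    have hupper : n * f t ≤ (k + 1) * f 1 := by
      rw [← hnat n t ht, ← Nat.cast_succ, ← hnat (k + 1) 1 zero_le_one, mul_one]
      exact hmono (by positivity) (by push_cast; exact hk1.le)
    rw [← abs_of_nonneg (Nat.cast_nonneg (α := ℝ) n), ← abs_mul, abs_le]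
    constructor <;> nlinarith
  by_contra hne
  have hpos : 0 < |f t - t * f 1| := abs_pos.2 (sub_ne_zero.2 hne)
  obtain ⟨n, hn⟩ := exists_nat_gt (f 1 / |f t - t * f 1|)
  rw [div_lt_iff₀ hpos] at hn
  linarith [hbound n]

theorem AntitoneOn.eq_exp_of_map_add_eq_mul {f : ℝ → ℝ} (hf : AntitoneOn f (Ici 0))
    (hpos : ∀ t ≥ (0 : ℝ), 0 < f t)
    (hmul : ∀ s ≥ (0 : ℝ), ∀ t ≥ (0 : ℝ), f (s + t) = f s * f t) {t : ℝ} (ht : 0 ≤ t) :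
    f t = exp (log (f 1) * t) := by
  have hlin : -log (f t) = t * -log (f 1) := by
    refine MonotoneOn.eq_mul_of_map_add (f := fun t => -log (f t)) ?_ ?_ ht
    · intro a ha b hb hab
      exact neg_le_neg (log_le_log (hpos b hb) (hf ha hb hab))
    · intro s hs t ht
      simp only [hmul s hs t ht, log_mul (hpos s hs).ne' (hpos t ht).ne']
      ring
  rw [← exp_log (hpos t ht)]
  congr 1
  linarith

theorem expMeasure_Ioi {r z : ℝ} (hr : 0 < r) (hz : 0 ≤ z) :
    expMeasure r (Ioi z) = ENNReal.ofReal (exp (-(r * z))) := by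
  have := isProbabilityMeasure_expMeasure hr
  rw [← ofReal_measureReal (measure_ne_top _ _), ← compl_Iic, measureReal_compl measurableSet_Iic,
    probReal_univ, ← cdf_eq_real, cdf_expMeasure_eq hr, if_pos hz, sub_sub_cancel]

theorem measure_Ioi_eq_one_of_nonpos {μ : Measure ℝ} [IsProbabilityMeasure μ]
    (h0 : μ (Ioi 0) = 1) {z : ℝ} (hz : z ≤ 0) : μ (Ioi z) = 1 :=
  le_antisymm prob_le_one (h0 ▸ measure_mono (Ioi_subset_Ioi hz))

theorem MeasureTheory.Measure.ext_of_measure_Ioi_of_nonneg {μ ν : Measure ℝ}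
    [IsProbabilityMeasure μ] [IsProbabilityMeasure ν] (h0 : μ (Ioi 0) = 1)
    (h : ∀ z ≥ (0 : ℝ), μ (Ioi z) = ν (Ioi z)) : μ = ν := by
  have hIoi : ∀ z, μ (Ioi z) = ν (Ioi z) := by
    intro z
    rcases le_total 0 z with hz | hz
    · exact h z hz
    · rw [measure_Ioi_eq_one_of_nonpos h0 hz,
        measure_Ioi_eq_one_of_nonpos ((h 0 le_rfl).symm.trans h0) hz]
  refine Measure.ext_of_Iic μ ν fun a => ?_
  rw [← compl_Ioi, prob_compl_eq_one_sub measurableSet_Ioi, prob_compl_eq_one_sub measurableSet_Ioi,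
    hIoi]

theorem tendsto_measure_Ioi_atTop (μ : Measure ℝ) [IsFiniteMeasure μ] :
    Tendsto (fun t => μ (Ioi t)) atTop (𝓝 0) := by
  have h := tendsto_measure_iInter_atTop (μ := μ) (s := fun t : ℝ => Ioi t)
    (fun _ => measurableSet_Ioi.nullMeasurableSet) (fun _ _ hab => Ioi_subset_Ioi hab)
    ⟨0, measure_ne_top _ _⟩
  have hempty : ⋂ t : ℝ, Ioi t = ∅ := iInter_eq_empty_iff.2 fun x => ⟨x, lt_irrefl x⟩
  rwa [hempty, measure_empty] at h

theorem exists_eq_expMeasure_of_measure_Ioi_add {ν : Measure ℝ} [IsProbabilityMeasure ν]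
    (hne : ∀ t ≥ (0 : ℝ), ν (Ioi t) ≠ 0)
    (hmul : ∀ s ≥ (0 : ℝ), ∀ t ≥ (0 : ℝ), ν (Ioi (s + t)) = ν (Ioi s) * ν (Ioi t)) :
    ∃ r > 0, ν = expMeasure r := by
  set S : ℝ → ℝ := fun t => ν.real (Ioi t)
  have hSpos : ∀ t ≥ (0 : ℝ), 0 < S t := fun t ht =>
    ENNReal.toReal_pos (hne t ht) (measure_ne_top _ _)
  have hS : ∀ t ≥ (0 : ℝ), S t = exp (log (S 1) * t) := fun t ht =>
    AntitoneOn.eq_exp_of_map_add_eq_mul (fun _ _ _ _ hab => measureReal_mono (Ioi_subset_Ioi hab))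
      hSpos (fun s hs t ht => by simp only [measureReal_def, hmul s hs t ht, ENNReal.toReal_mul]) ht
  have hS1 : S 1 < 1 := by
    refine lt_of_le_of_ne measureReal_le_one fun h1 => ?_
    have htail : ∀ t ≥ (0 : ℝ), ν (Ioi t) = 1 := fun t ht => by
      rw [← ofReal_measureReal, ← ENNReal.ofReal_one]
      change ENNReal.ofReal (S t) = _
      rw [hS t ht, h1, log_one, zero_mul, exp_zero]
    exact zero_ne_one (tendsto_nhds_unique (tendsto_measure_Ioi_atTop ν)
      (tendsto_const_nhds.congr' (eventually_ge_atTop 0 |>.mono fun t ht => (htail t ht).symm)))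
  have hr : 0 < -log (S 1) := neg_pos.2 (log_neg (hSpos 1 zero_le_one) hS1)
  have := isProbabilityMeasure_expMeasure hr
  refine ⟨-log (S 1), hr, ?_⟩
  have hIoi : ∀ z ≥ (0 : ℝ), ν (Ioi z) = expMeasure (-log (S 1)) (Ioi z) := fun z hz => by
    rw [expMeasure_Ioi hr hz, ← ofReal_measureReal, neg_mul_eq_neg_mul, neg_neg, ← hS z hz]
  exact Measure.ext_of_measure_Ioi_of_nonneg
    (by simpa [expMeasure_Ioi hr le_rfl] using hIoi 0 le_rfl) hIoi

def IsMemoryless {Ω : Type*} [MeasurableSpace Ω] (μ : Measure Ω) (Z : Ω → ℝ) : Prop :=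
  ∀ s ≥ (0 : ℝ), ∀ t ≥ (0 : ℝ), μ[|{ω | Z ω > t}] {ω | Z ω - t > s} = μ {ω | Z ω > s}

namespace IsMemoryless

variable {Ω : Type*} [MeasurableSpace Ω] {μ : Measure Ω} {Z : Ω → ℝ}

theorem measure_gt_ne_zero (hZ : Measurable Z) (h : IsMemoryless μ Z)
    (h0 : μ {ω | Z ω > 0} ≠ 0) {t : ℝ} (ht : 0 ≤ t) : μ {ω | Z ω > t} ≠ 0 := by
  intro hzero
  have hcond := h 0 le_rfl t ht
  rw [cond_apply (s := {ω | Z ω > t}) (hZ measurableSet_Ioi),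
    measure_mono_null inter_subset_left hzero, mul_zero] at hcond
  exact h0 hcond.symm

theorem measure_gt_add [IsFiniteMeasure μ] (hZ : Measurable Z) (h : IsMemoryless μ Z)
    (h0 : μ {ω | Z ω > 0} ≠ 0) {s t : ℝ} (hs : 0 ≤ s) (ht : 0 ≤ t) :
    μ {ω | Z ω > s + t} = μ {ω | Z ω > s} * μ {ω | Z ω > t} := by
  have hset : {ω | Z ω > t} ∩ {ω | Z ω - t > s} = {ω | Z ω > s + t} := by
    ext ω
    simp only [mem_inter_iff, mem_ofPred_eq]
    constructor
    · rintro ⟨-, hgt⟩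
      linarith
    · intro hgt
      constructor <;> linarith
  have hcond := h s hs t ht
  rw [cond_apply (s := {ω | Z ω > t}) (hZ measurableSet_Ioi), hset] at hcond
  rw [← hcond, mul_comm, ← mul_assoc, ENNReal.mul_inv_cancel (measure_gt_ne_zero hZ h h0 ht)
    (measure_ne_top _ _), one_mul]

end IsMemoryless

/-- The exponential distribution is the unique memoryless distribution on the positive reals:
if `Z` is a real random variable with `P(Z > 0) = 1` satisfying the lack of memory property
`P(Z - t > s | Z > t) = P(Z > s)` for all `s, t ≥ 0`, then there is a rate `λ > 0` such that
`Z ~ Exp(λ)`; equivalently, `P(Z > z) = e^{-λ z}` for all `z ≥ 0`. -/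
theorem memoryless_is_exponential
    {Ω : Type*} [MeasureSpace Ω] [IsProbabilityMeasure (ℙ : Measure Ω)]
    (Z : Ω → ℝ) (hZ : Measurable Z)
    (hpos : ℙ {ω | Z ω > 0} = 1)
    (hmem : ∀ s ≥ (0 : ℝ), ∀ t ≥ (0 : ℝ),
      ℙ[|{ω | Z ω > t}] {ω | Z ω - t > s} = ℙ {ω | Z ω > s}) :
    ∃ lam > (0 : ℝ), Measure.map Z ℙ = expMeasure lam ∧
      ∀ z ≥ (0 : ℝ), ℙ {ω | Z ω > z} = ENNReal.ofReal (Real.exp (-lam * z)) := by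
  have h0 : ℙ {ω | Z ω > 0} ≠ 0 := by simp [hpos]
  have := Measure.isProbabilityMeasure_map (μ := (ℙ : Measure Ω)) hZ.aemeasurable
  have hIoi : ∀ t, Measure.map Z ℙ (Ioi t) = ℙ {ω | Z ω > t} := fun t =>
    Measure.map_apply hZ measurableSet_Ioi
  obtain ⟨lam, hlam, hlaw⟩ := exists_eq_expMeasure_of_measure_Ioi_add (ν := Measure.map Z ℙ)
    (fun t ht => hIoi t ▸ IsMemoryless.measure_gt_ne_zero hZ hmem h0 ht)
    (fun s hs t ht => by simp only [hIoi]; exact IsMemoryless.measure_gt_add hZ hmem h0 hs ht)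
  refine ⟨lam, hlam, hlaw, fun z hz => ?_⟩
  rw [← hIoi, hlaw, expMeasure_Ioi hlam hz, neg_mul]
end

section
/- (Inverse of a submatrix) Let A ∈ ℝ^{n×n} be invertible, let 1 ≤ i ≤ n, and let Ã be the matrix obtained from A by deleting its i-th row and i-th column. Let E be the submatrix of A⁻¹ obtained by deleting its i-th row and i-th column, let f be the i-th column of A⁻¹ with its i-th entry removed, let g be the i-th row of A⁻¹ with its i-th entry removed, and let h be the (i,i) entry of A⁻¹. If h ≠ 0 then Ã is invertible and Ã⁻¹ = E − f gᵀ / h. -/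
/-!
Write `Ã`, `E`, `f`, `g`, `h` as in the statement and let `a` be the `i`-th column of `A`
without its `i`-th entry. Splitting off the index `i` in the sums of `A * A⁻¹ = 1` gives
`Ã * E + a gᵀ = 1` and `Ã f + h a = 0`, hence `Ã * (E - f gᵀ / h) = 1 - a gᵀ + a gᵀ = 1`.
-/

namespace Matrix

variable {l k p o : Type*} {n : ℕ}

section Semiring

variable {R : Type*} [NonUnitalNonAssocSemiring R]

theorem submatrix_mul_eq_succAbove_add_vecMulVec (A : Matrix l (Fin (n + 1)) R)
    (B : Matrix (Fin (n + 1)) o R) (i : Fin (n + 1)) (r : k → l) (c : p → o) :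
    (A * B).submatrix r c = A.submatrix r i.succAbove * B.submatrix i.succAbove c +
      vecMulVec (fun j => A (r j) i) (fun j => B i (c j)) := by
  ext j j'
  simp [mul_apply, Fin.sum_univ_succAbove _ i, vecMulVec_apply, add_comm]

theorem mulVec_comp_eq_succAbove_add (A : Matrix l (Fin (n + 1)) R) (v : Fin (n + 1) → R)
    (i : Fin (n + 1)) (r : k → l) :
    (A *ᵥ v) ∘ r =
      A.submatrix r i.succAbove *ᵥ (v ∘ i.succAbove) + fun j => A (r j) i * v i := by
  ext j
  simp [mulVec, dotProduct, Fin.sum_univ_succAbove _ i, add_comm]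

end Semiring

theorem submatrix_succAbove_mul_sub_vecMulVec_eq_one {K : Type*} [Field K]
    {A B : Matrix (Fin (n + 1)) (Fin (n + 1)) K} (hAB : A * B = 1) (i : Fin (n + 1))
    (hB : B i i ≠ 0) :
    A.submatrix i.succAbove i.succAbove * (B.submatrix i.succAbove i.succAbove -
      (B i i)⁻¹ • vecMulVec (fun j => B (i.succAbove j) i) (fun j => B i (i.succAbove j))) =
      1 := by
  set a : Fin n → K := fun j => A (i.succAbove j) i
  set f : Fin n → K := fun j => B (i.succAbove j) i
  set g : Fin n → K := fun j => B i (i.succAbove j)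
  have hsub : A.submatrix i.succAbove i.succAbove * B.submatrix i.succAbove i.succAbove
      = 1 - vecMulVec a g := by
    rw [eq_sub_iff_add_eq, ← submatrix_mul_eq_succAbove_add_vecMulVec, hAB,
      submatrix_one _ Fin.succAbove_right_injective]
  have hmulVec : A.submatrix i.succAbove i.succAbove *ᵥ f = -(B i i • a) := by
    have hcol : (A *ᵥ fun m => B m i) ∘ i.succAbove = 0 := by
      ext j
      simp [mulVec, dotProduct, ← mul_apply, hAB, Fin.succAbove_ne]
    rw [mulVec_comp_eq_succAbove_add A _ i] at hcol
    rw [eq_neg_iff_add_eq_zero, ← hcol]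
    congr 1
    funext j
    exact mul_comm _ _
  rw [mul_sub, Matrix.mul_smul, mul_vecMulVec, hmulVec, hsub, neg_vecMulVec, smul_vecMulVec,
    smul_neg, smul_smul, inv_mul_cancel₀ hB, one_smul, sub_neg_eq_add, sub_add_cancel]

end Matrix

open Matrix

/-- Inverse of a submatrix: let `A` be invertible, and let `Ã` be obtained from `A` by
deleting its `i`-th row and column. Let `E` be `A⁻¹` with its `i`-th row and column deleted,
`f` the `i`-th column of `A⁻¹` without its `i`-th entry, `g` the `i`-th row of `A⁻¹` without
its `i`-th entry, and `h` the `(i, i)` entry of `A⁻¹`. If `h ≠ 0` then `Ã` is invertible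
and `Ã⁻¹ = E − f gᵀ / h`. -/
theorem inverse_of_submatrix {n : ℕ}
    (A : Matrix (Fin (n + 1)) (Fin (n + 1)) ℝ) (hA : IsUnit A.det)
    (i : Fin (n + 1))
    (E : Matrix (Fin n) (Fin n) ℝ) (f g : Fin n → ℝ) (h : ℝ)
    (hE : E = A⁻¹.submatrix i.succAbove i.succAbove)
    (hf : f = fun j => A⁻¹ (i.succAbove j) i)
    (hg : g = fun j => A⁻¹ i (i.succAbove j))
    (hh : h = A⁻¹ i i)
    (hne : h ≠ 0) :
    IsUnit (A.submatrix i.succAbove i.succAbove : Matrix (Fin n) (Fin n) ℝ).det ∧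
    (A.submatrix i.succAbove i.succAbove : Matrix (Fin n) (Fin n) ℝ)⁻¹
      = E - h⁻¹ • vecMulVec f g := by
  subst hE hf hg hh
  have hright := submatrix_succAbove_mul_sub_vecMulVec_eq_one (mul_nonsing_inv A hA) i hne
  exact ⟨isUnit_det_of_right_inverse hright, inv_eq_right_inv hright⟩
end
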